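/- arXiv:1304.1263 — 2 statements merged into one kernel-verified Lean document; each statement's English description precedes it below -/
import Mathlib

section
/- Daisy chaining is a bijection between permutations of {1,...,n} and single-cycle permutations of {1,...,n+1}. -/
open scoped Classical in
/-- The heads (smallest elements of each cycle) of `σ`, listed in increasing order. -/
noncomputable def headsList {n : ℕ} (σ : Equiv.Perm (Fin n)) : List (Fin n) :=
  Finset.sort (Finset.univ.filter (fun c => ∀ k : ℕ, c ≤ (σ ^ k) c)) (· ≤ ·)

/-- Daisy chaining of `σ`: with cycle heads `c₁ < … < c_k`, define `σ'` on `{0,…,n}` by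
`σ'(cᵢ) = σ(cᵢ₊₁)` for `i < k`, `σ'(c_k) = 0`, `σ'(0) = σ(c₁)` and `σ'(j) = σ(j)`
otherwise, then shift `{0,…,n}` up to `{1,…,n+1}`.  Here `Fin (n+1)` models `{0,…,n}`,
with `Fin.succ` embedding `Fin n` as `{1,…,n}`. -/
noncomputable def daisy {n : ℕ} (σ : Equiv.Perm (Fin n)) : Fin (n + 1) → Fin (n + 1) :=
  fun x =>
    Fin.cases ((headsList σ).head?.elim 0 fun c => (σ c).succ)
      (fun y =>
        if y ∈ headsList σ then
          (((headsList σ).drop ((headsList σ).idxOf y + 1)).head?.elim 0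
            fun c => (σ c).succ)
        else (σ y).succ) x

/-!
Daisy chaining factors as `σ̂ * (0 c₁ … c_k)`, where `σ̂` fixes `0` and acts as `σ` on
`{1,…,n}`, and `(0 c₁ … c_k)` is the cycle through `0` and the shifted cycle heads. From any
point the daisy chain follows `σ` until it meets the head of the current cycle and then jumps
into the next cycle, so every point reaches `0` and the daisy chain is a single cycle.
Conversely the heads are the points that are smaller than everything their orbit visits before
it returns to `0`; so the daisy chain determines the heads, hence the second factor, hence `σ`.
An injection from the `n!` permutations of `n` points into the `n!` single-cycle permutations
of `n + 1` points is onto.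
-/

open Finset
open scoped Nat

namespace Equiv.Perm

theorem forall_exists_pow_apply_eq_iff_isCycleOn_univ {α : Type*} [Finite α] {f : Perm α} :
    (∀ x y, ∃ k : ℕ, (f ^ k) x = y) ↔ f.IsCycleOn _root_.Set.univ := by
  refine ⟨fun h => ⟨f.bijOn fun _ => Iff.rfl, fun x _ y _ => ?_⟩, fun h x y => ?_⟩
  · obtain ⟨k, hk⟩ := h x y
    exact ⟨k, by simpa using hk⟩
  · obtain ⟨k, -, -, hk⟩ := (h.2 (Set.mem_univ x) (Set.mem_univ y)).exists_pow_eq''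
    exact ⟨k, hk⟩

section Card

variable {α : Type*} [Fintype α]

theorem isCycleOn_univ_iff_cycleType_eq [DecidableEq α] {f : Perm α}
    (hα : 2 ≤ Fintype.card α) :
    f.IsCycleOn _root_.Set.univ ↔ f.cycleType = {Fintype.card α} := by
  have huniv : (_root_.Set.univ : Set α).Nontrivial := by
    rw [Set.nontrivial_univ_iff, ← Fintype.one_lt_card_iff_nontrivial]; omega
  constructor
  · intro hf
    have hsupp : f.support = univ :=
      eq_univ_of_forall fun x => mem_support.2 (hf.apply_ne huniv (Set.mem_univ x))
    rw [(isCycle_iff_exists_isCycleOn.2 ⟨_, huniv, hf, fun x _ => Set.mem_univ x⟩).cycleType,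
      hsupp, Finset.card_univ]
  · intro hf
    have hcycle : f.IsCycle := card_cycleType_eq_one.1 (by simp [hf])
    have hsupp : f.support = univ :=
      eq_univ_of_card _ (by rw [← sum_cycleType, hf, Multiset.sum_singleton])
    convert hcycle.isCycleOn
    ext x
    simpa using (Finset.ext_iff.1 hsupp x).symm

theorem ncard_isCycleOn_univ :
    {f : Perm α | f.IsCycleOn _root_.Set.univ}.ncard = (Fintype.card α - 1)! := by
  classical
  rcases le_or_gt (Fintype.card α) 1 with hα | hα
  · have : Subsingleton α := Fintype.card_le_one_iff_subsingleton.1 hα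
    have hall : {f : Perm α | f.IsCycleOn _root_.Set.univ} = _root_.Set.univ :=
      Set.eq_univ_of_forall fun f => isCycleOn_of_subsingleton f _
    rw [hall, Set.ncard_univ, Nat.card_perm, Nat.card_eq_fintype_card]
    interval_cases Fintype.card α <;> rfl
  · simp_rw [isCycleOn_univ_iff_cycleType_eq hα]
    rw [← Finset.coe_filter_univ, Set.ncard_coe_finset, card_of_cycleType_singleton hα le_rfl,
      Nat.choose_self, mul_one]

end Card

section CycleMin

variable {α : Type*} [Fintype α] [LinearOrder α] (σ : Perm α)

def cycleMin (x : α) : α :=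
  ({y | σ.SameCycle x y} : Finset α).min' ⟨x, by simp [SameCycle.refl]⟩

theorem sameCycle_cycleMin (x : α) : σ.SameCycle x (σ.cycleMin x) :=
  (mem_filter.1 (min'_mem _ _)).2

variable {σ}

theorem cycleMin_le {x y : α} (h : σ.SameCycle x y) : σ.cycleMin x ≤ y :=
  min'_le _ _ (by simpa using h)

theorem cycleMin_le_self (x : α) : σ.cycleMin x ≤ x := cycleMin_le SameCycle.rfl

theorem SameCycle.cycleMin_eq {x y : α} (h : σ.SameCycle x y) : σ.cycleMin x = σ.cycleMin y :=
  le_antisymm (cycleMin_le (h.trans (σ.sameCycle_cycleMin y)))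
    (cycleMin_le (h.symm.trans (σ.sameCycle_cycleMin x)))

theorem cycleMin_apply (x : α) : σ.cycleMin (σ x) = σ.cycleMin x :=
  SameCycle.rfl.apply_right.cycleMin_eq.symm

theorem cycleMin_eq_self_iff {x : α} : σ.cycleMin x = x ↔ ∀ k : ℕ, x ≤ (σ ^ k) x := by
  refine ⟨fun h k => h ▸ cycleMin_le ⟨k, by simp [h]⟩, fun h => ?_⟩
  obtain ⟨k, -, -, hk⟩ := (σ.sameCycle_cycleMin x).exists_pow_eq''
  exact le_antisymm (cycleMin_le_self x) (hk ▸ h k)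

end CycleMin

end Equiv.Perm

theorem List.formPerm_cons_apply_getElem {α : Type*} [DecidableEq α] {x : α} {xs : List α}
    (h : (x :: xs).Nodup) (i : ℕ) (hi : i < xs.length + 1) :
    formPerm (x :: xs) (x :: xs)[i] = xs[i]?.getD x := by
  rcases (Nat.lt_succ_iff.1 hi).lt_or_eq with hi | rfl
  · rw [formPerm_apply_lt_getElem _ h i (by simpa using hi)]
    simp [hi]
  · simp

open Equiv Perm

variable {n : ℕ}

theorem mem_headsList {σ : Perm (Fin n)} {c : Fin n} :
    c ∈ headsList σ ↔ σ.cycleMin c = c := by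
  simp [headsList, cycleMin_eq_self_iff]

theorem cycleMin_mem_headsList (σ : Perm (Fin n)) (x : Fin n) : σ.cycleMin x ∈ headsList σ :=
  mem_headsList.2 (σ.sameCycle_cycleMin x).symm.cycleMin_eq

theorem headsList_sortedLT (σ : Perm (Fin n)) : (headsList σ).SortedLT :=
  Finset.sortedLT_sort _

theorem headsList_nodup (σ : Perm (Fin n)) : (headsList σ).Nodup :=
  (headsList_sortedLT σ).nodup

-- `decomposeFin.symm (0, σ)` fixes `0` and sends `y.succ` to `(σ y).succ`.
noncomputable def daisyPerm (σ : Perm (Fin n)) : Perm (Fin (n + 1)) :=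
  decomposeFin.symm (0, σ) * List.formPerm (0 :: (headsList σ).map Fin.succ)

theorem nodup_zero_cons_map_succ_headsList (σ : Perm (Fin n)) :
    (0 :: (headsList σ).map Fin.succ).Nodup := by
  simp [(headsList_nodup σ).map (Fin.succ_injective _), Fin.succ_ne_zero]

theorem daisyPerm_apply_getElem (σ : Perm (Fin n)) (i : ℕ)
    (hi : i < (headsList σ).length + 1) :
    daisyPerm σ ((0 :: (headsList σ).map Fin.succ)[i]'(by simpa using hi)) =
      (headsList σ)[i]?.elim 0 fun c => (σ c).succ := by
  rw [daisyPerm, Perm.mul_apply,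
    List.formPerm_cons_apply_getElem (nodup_zero_cons_map_succ_headsList σ) i (by simpa using hi),
    List.getElem?_map]
  cases (headsList σ)[i]? <;> simp

theorem daisyPerm_zero (σ : Perm (Fin n)) :
    daisyPerm σ 0 = (headsList σ)[0]?.elim 0 fun c => (σ c).succ :=
  daisyPerm_apply_getElem σ 0 (Nat.succ_pos _)

theorem daisyPerm_succ_getElem (σ : Perm (Fin n)) (i : ℕ) (hi : i < (headsList σ).length) :
    daisyPerm σ (headsList σ)[i].succ =
      (headsList σ)[i + 1]?.elim 0 fun c => (σ c).succ := by
  simpa using daisyPerm_apply_getElem σ (i + 1) (by omega)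

theorem daisyPerm_succ_of_notMem {σ : Perm (Fin n)} {y : Fin n} (hy : y ∉ headsList σ) :
    daisyPerm σ y.succ = (σ y).succ := by
  rw [daisyPerm, Perm.mul_apply, List.formPerm_apply_of_notMem (by simp [hy, Fin.succ_ne_zero])]
  simp

theorem coe_daisyPerm (σ : Perm (Fin n)) : ⇑(daisyPerm σ) = daisy σ := by
  ext1 x
  induction x using Fin.cases with
  | zero => simp [daisy, daisyPerm_zero, List.head?_eq_getElem?]
  | succ y =>
    by_cases hy : y ∈ headsList σ
    · have hnext := daisyPerm_succ_getElem σ _ (List.idxOf_lt_length_of_mem hy)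
      simp only [List.getElem_idxOf] at hnext
      simp [daisy, hy, hnext, List.head?_drop]
    · simp [daisy, hy, daisyPerm_succ_of_notMem hy]

theorem daisyPerm_pow_succ_of_forall_notMem {σ : Perm (Fin n)} {y : Fin n} {m : ℕ}
    (h : ∀ j < m, (σ ^ j) y ∉ headsList σ) :
    (daisyPerm σ ^ m) y.succ = ((σ ^ m) y).succ := by
  induction m with
  | zero => simp
  | succ m ih =>
    rw [pow_succ', Perm.mul_apply, ih fun j hj => h j (by omega),
      daisyPerm_succ_of_notMem (h m (by omega)), pow_succ', Perm.mul_apply]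

theorem exists_daisyPerm_pow_eq_cycleMin (σ : Perm (Fin n)) (y : Fin n) :
    ∃ m, (daisyPerm σ ^ m) y.succ = (σ.cycleMin y).succ ∧
      ∀ j ≤ m, (daisyPerm σ ^ j) y.succ ≠ 0 := by
  have hex : ∃ m, (σ ^ m) y ∈ headsList σ := by
    obtain ⟨k, -, -, hk⟩ := (σ.sameCycle_cycleMin y).exists_pow_eq''
    exact ⟨k, hk ▸ cycleMin_mem_headsList σ y⟩
  have hfollow : ∀ j ≤ Nat.find hex, (daisyPerm σ ^ j) y.succ = ((σ ^ j) y).succ :=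
    fun j hj => daisyPerm_pow_succ_of_forall_notMem fun i hi => Nat.find_min hex (by omega)
  refine ⟨Nat.find hex, ?_, fun j hj => hfollow j hj ▸ Fin.succ_ne_zero _⟩
  rw [hfollow _ le_rfl, ← mem_headsList.1 (Nat.find_spec hex),
    ← (SameCycle.refl σ y).pow_right.cycleMin_eq]

theorem sameCycle_daisyPerm_succ_getElem_zero (σ : Perm (Fin n)) (i : ℕ)
    (hi : i < (headsList σ).length) : (daisyPerm σ).SameCycle (headsList σ)[i].succ 0 := by
  have hstep := daisyPerm_succ_getElem σ i hi
  rcases lt_or_ge (i + 1) (headsList σ).length with hnext | hlast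
  · set c := (headsList σ)[i + 1]
    rw [List.getElem?_eq_getElem hnext, Option.elim_some] at hstep
    obtain ⟨m, hm, -⟩ := exists_daisyPerm_pow_eq_cycleMin σ (σ c)
    rw [cycleMin_apply, mem_headsList.1 (List.getElem_mem hnext)] at hm
    have hjump : (daisyPerm σ).SameCycle (headsList σ)[i].succ (σ c).succ :=
      hstep ▸ SameCycle.rfl.apply_right
    have hfollow : (daisyPerm σ).SameCycle (σ c).succ c.succ := hm ▸ SameCycle.rfl.pow_right
    exact hjump.trans (hfollow.trans (sameCycle_daisyPerm_succ_getElem_zero σ (i + 1) hnext))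
  · rw [List.getElem?_eq_none hlast, Option.elim_none] at hstep
    exact hstep ▸ SameCycle.rfl.apply_right
termination_by (headsList σ).length - i

theorem sameCycle_daisyPerm_zero (σ : Perm (Fin n)) (x : Fin (n + 1)) :
    (daisyPerm σ).SameCycle x 0 := by
  induction x using Fin.cases with
  | zero => exact SameCycle.rfl
  | succ y =>
    obtain ⟨m, hm, -⟩ := exists_daisyPerm_pow_eq_cycleMin σ y
    obtain ⟨i, hi, hc⟩ := List.getElem_of_mem (cycleMin_mem_headsList σ y)
    rw [← hc] at hm
    exact (hm ▸ SameCycle.rfl.pow_right).trans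
      (sameCycle_daisyPerm_succ_getElem_zero σ i hi)

theorem daisyPerm_isCycleOn_univ (σ : Perm (Fin n)) :
    (daisyPerm σ).IsCycleOn _root_.Set.univ :=
  ⟨(daisyPerm σ).bijOn fun _ => Iff.rfl, fun x _ y _ =>
    (sameCycle_daisyPerm_zero σ x).trans (sameCycle_daisyPerm_zero σ y).symm⟩

theorem cycleMin_le_cycleMin_of_daisyPerm_succ {σ : Perm (Fin n)} {z w : Fin n}
    (h : daisyPerm σ z.succ = w.succ) : σ.cycleMin z ≤ σ.cycleMin w := by
  by_cases hz : z ∈ headsList σ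
  · obtain ⟨i, hi, rfl⟩ := List.getElem_of_mem hz
    rw [daisyPerm_succ_getElem σ i hi] at h
    rcases hnext : (headsList σ)[i + 1]? with _ | c
    · rw [hnext, Option.elim_none] at h
      exact absurd h.symm (Fin.succ_ne_zero w)
    · rw [hnext, Option.elim_some, Fin.succ_inj] at h
      obtain ⟨hlt, rfl⟩ := List.getElem?_eq_some_iff.1 hnext
      rw [← h, cycleMin_apply, mem_headsList.1 hz, mem_headsList.1 (List.getElem_mem hlt)]
      exact ((headsList_sortedLT σ).getElem_lt_getElem_iff.2 (Nat.lt_succ_self i)).le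
  · rw [daisyPerm_succ_of_notMem hz, Fin.succ_inj] at h
    rw [← h, cycleMin_apply]

theorem mem_headsList_iff_daisyPerm {σ : Perm (Fin n)} {y : Fin n} :
    y ∈ headsList σ ↔ ∀ m, (∀ j ≤ m, (daisyPerm σ ^ j) y.succ ≠ 0) →
      y.succ ≤ (daisyPerm σ ^ m) y.succ := by
  refine ⟨fun hy => ?_, fun h => ?_⟩
  · have hpath : ∀ m, (∀ j ≤ m, (daisyPerm σ ^ j) y.succ ≠ 0) →
        ∃ w, (daisyPerm σ ^ m) y.succ = w.succ ∧ y ≤ σ.cycleMin w := by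
      intro m
      induction m with
      | zero => exact fun _ => ⟨y, rfl, (mem_headsList.1 hy).ge⟩
      | succ m ih =>
        intro hne
        obtain ⟨w, hw, hyw⟩ := ih fun j hj => hne j (by omega)
        obtain ⟨w', hw'⟩ := Fin.exists_succ_eq.2 (hne (m + 1) le_rfl)
        rw [pow_succ', Perm.mul_apply, hw] at hw'
        exact ⟨w', by rw [pow_succ', Perm.mul_apply, hw, hw'],
          hyw.trans (cycleMin_le_cycleMin_of_daisyPerm_succ hw'.symm)⟩
    intro m hm
    obtain ⟨w, hw, hyw⟩ := hpath m hm
    rw [hw, Fin.succ_le_succ_iff]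
    exact hyw.trans (cycleMin_le_self w)
  · obtain ⟨m, hm, hne⟩ := exists_daisyPerm_pow_eq_cycleMin σ y
    have hle := h m hne
    rw [hm, Fin.succ_le_succ_iff] at hle
    exact mem_headsList.2 ((cycleMin_le_self y).antisymm hle)

theorem daisyPerm_injective : Function.Injective (daisyPerm (n := n)) := by
  intro σ σ' h
  have hheads : headsList σ = headsList σ' :=
    (headsList_sortedLT σ).eq_of_mem_iff (headsList_sortedLT σ') fun y => by
      rw [mem_headsList_iff_daisyPerm, mem_headsList_iff_daisyPerm, h]
  rw [daisyPerm, daisyPerm, hheads, mul_left_inj] at h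
  exact (Prod.ext_iff.1 (decomposeFin.symm.injective h)).2

theorem range_daisyPerm :
    _root_.Set.range (daisyPerm (n := n)) = {τ | τ.IsCycleOn _root_.Set.univ} := by
  refine Set.eq_of_subset_of_ncard_le (Set.range_subset_iff.2 daisyPerm_isCycleOn_univ) ?_
    (Set.toFinite _)
  rw [ncard_isCycleOn_univ, Set.ncard_range_of_injective daisyPerm_injective, Nat.card_perm,
    Nat.card_eq_fintype_card, Fintype.card_fin, Fintype.card_fin, Nat.add_sub_cancel]

/-- Daisy chaining is a bijection between permutations of `{1,…,n}` and single-cycle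
permutations of `{1,…,n+1}` (permutations whose powers act transitively). -/
theorem daisy_bijection (n : ℕ) (τ : Equiv.Perm (Fin (n + 1))) :
    (∀ x y : Fin (n + 1), ∃ k : ℕ, (τ ^ k) x = y) ↔
      ∃! σ : Equiv.Perm (Fin n), ∀ x : Fin (n + 1), τ x = daisy σ x := by
  simp_rw [← coe_daisyPerm, ← Equiv.ext_iff, forall_exists_pow_apply_eq_iff_isCycleOn_univ]
  change τ ∈ {τ : Perm (Fin (n + 1)) | τ.IsCycleOn _root_.Set.univ} ↔ _
  rw [← range_daisyPerm]
  constructor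
  · rintro ⟨σ, rfl⟩
    exact ⟨σ, rfl, fun σ' h => daisyPerm_injective h.symm⟩
  · rintro ⟨σ, rfl, -⟩
    exact ⟨σ, rfl⟩
end

section
/- Entry/exit lemma, second part: if S is a non-singlet family and x ∉ S is inserted regularly into S to obtain a family S', then x is in an exit position in S'. -/
/-- A (non-singlet) sequence family: a list `(a₁,…,a_k,b_l,…,b₁)` of integers with
`k, l ≥ 1` and `b₁ < … < b_l < a₁ < … < a_k`; the `aᵢ` (the increasing prefix) are the
reds (ascent values) and the `bⱼ` (the decreasing suffix) are the blues (descent values). -/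
def IsFamilySeq (l : List ℤ) : Prop :=
  ∃ a d : List ℤ, l = a ++ d ∧ a ≠ [] ∧ d ≠ [] ∧
    a.Chain' (· < ·) ∧ d.Chain' (· > ·) ∧ ∀ u ∈ d, ∀ v ∈ a, u < v

/-- Insert `m` immediately before (the unique occurrence of) `x` in `l`. -/
def insertBefore (l : List ℤ) (x m : ℤ) : List ℤ :=
  l.takeWhile (· != x) ++ m :: l.dropWhile (· != x)

/-- `x` is in an exit position of the family `l`: inserting any `m` larger than all
elements of `l` immediately before `x` does not yield a family. -/
def ExitPos (l : List ℤ) (x : ℤ) : Prop :=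
  x ∈ l ∧ ∀ m : ℤ, (∀ y ∈ l, y < m) → ¬ IsFamilySeq (insertBefore l x m)

/-- `l'` is the regular insertion of `x` into the family `l = a ++ d` (reds `a`, blues `d`,
highest blue `b_l = max d`): if `x > b_l` then `x` is inserted, colored red, at its order
position among the reds, and if `x < b_l` then `x` is inserted, colored blue, at its order
position among the blues. -/
def RegInsert (l : List ℤ) (x : ℤ) (l' : List ℤ) : Prop :=
  ∃ a d : List ℤ, l = a ++ d ∧ a ≠ [] ∧ d ≠ [] ∧
    a.Chain' (· < ·) ∧ d.Chain' (· > ·) ∧ (∀ u ∈ d, ∀ v ∈ a, u < v) ∧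
    (((∀ u ∈ d, u < x) ∧ l' = List.orderedInsert (· ≤ ·) x a ++ d) ∨
     ((∃ u ∈ d, x < u) ∧ l' = a ++ List.orderedInsert (fun p q => q ≤ p) x d))

/-!
Inserting a value `m` larger than every entry immediately before `x` makes `m` the last red of
any family structure, so the result is a family only if the entries before `x` form an increasing
run of values above `x` and `x` starts a decreasing run. A regular insertion never leaves `x` in
such a position: a red `x` has a red neighbour, smaller before it or larger after it, and a blue
`x` below the highest blue is preceded by reds followed by a smaller blue.
-/

open List

theorem List.Pairwise.orderedInsert_lt {α : Type*} [LinearOrder α] {l : List α} {x : α}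
    (hl : l.Pairwise (· < ·)) (hx : x ∉ l) : (l.orderedInsert (· ≤ ·) x).Pairwise (· < ·) := by
  have hnodup : (l.orderedInsert (· ≤ ·) x).Nodup :=
    (perm_orderedInsert _ x l).nodup_iff.mpr (nodup_cons.mpr ⟨hx, hl.imp ne_of_lt⟩)
  exact (((hl.imp le_of_lt).orderedInsert x l).and hnodup).imp fun h => lt_of_le_of_ne h.1 h.2

theorem List.Pairwise.orderedInsert_gt {α : Type*} [LinearOrder α] {l : List α} {x : α}
    (hl : l.Pairwise (· > ·)) (hx : x ∉ l) : (l.orderedInsert (· ≥ ·) x).Pairwise (· > ·) :=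
  hl.orderedInsert_lt (α := αᵒᵈ) hx

theorem List.exists_orderedInsert_eq_append_cons {α : Type*} (r : α → α → Prop) [DecidableRel r]
    (x : α) (l : List α) : ∃ l₁ l₂, l.orderedInsert r x = l₁ ++ x :: l₂ ∧ l₁ ++ l₂ = l :=
  ⟨_, _, orderedInsert_eq_take_drop r x l, takeWhile_append_dropWhile⟩

theorem List.orderedInsert_ne_nil {α : Type*} (r : α → α → Prop) [DecidableRel r] (x : α)
    (l : List α) : l.orderedInsert r x ≠ [] :=
  ne_nil_of_mem ((mem_orderedInsert r).mpr (Or.inl rfl))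

theorem insertBefore_append_cons {p : List ℤ} {x : ℤ} (hx : x ∉ p) (m : ℤ) (q : List ℤ) :
    insertBefore (p ++ x :: q) x m = p ++ m :: x :: q := by
  induction p with
  | nil => simp [insertBefore]
  | cons b p ih =>
    obtain ⟨hbx, hxp⟩ := ne_and_not_mem_of_not_mem_cons hx
    simpa [insertBefore, Ne.symm hbx] using ih hxp

def IsFamilySplit (a d : List ℤ) : Prop :=
  a.Pairwise (· < ·) ∧ d.Pairwise (· > ·) ∧ ∀ u ∈ d, ∀ v ∈ a, u < v

theorem isFamilySeq_iff {l : List ℤ} :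
    IsFamilySeq l ↔ ∃ a d, l = a ++ d ∧ a ≠ [] ∧ d ≠ [] ∧ IsFamilySplit a d := by
  simp only [IsFamilySeq, IsFamilySplit, ← isChain_iff_pairwise]
  rfl

theorem IsFamilySplit.isFamilySeq {a d : List ℤ} (h : IsFamilySplit a d) (ha : a ≠ [])
    (hd : d ≠ []) : IsFamilySeq (a ++ d) :=
  isFamilySeq_iff.mpr ⟨a, d, rfl, ha, hd, h⟩

theorem IsFamilySplit.orderedInsert_red {a d : List ℤ} {x : ℤ} (h : IsFamilySplit a d)
    (hxa : x ∉ a) (hdx : ∀ u ∈ d, u < x) : IsFamilySplit (a.orderedInsert (· ≤ ·) x) d := by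
  obtain ⟨ha, hd, hda⟩ := h
  refine ⟨ha.orderedInsert_lt hxa, hd, fun u hu v hv => ?_⟩
  rcases (mem_orderedInsert _).mp hv with rfl | hv
  exacts [hdx u hu, hda u hu v hv]

theorem IsFamilySplit.orderedInsert_blue {a d : List ℤ} {x : ℤ} (h : IsFamilySplit a d)
    (hxd : x ∉ d) (hxa : ∀ v ∈ a, x < v) : IsFamilySplit a (d.orderedInsert (· ≥ ·) x) := by
  obtain ⟨ha, hd, hda⟩ := h
  refine ⟨ha, hd.orderedInsert_gt hxd, fun u hu v hv => ?_⟩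
  rcases (mem_orderedInsert _).mp hu with rfl | hu
  exacts [hxa v hv, hda u hu v hv]

theorem IsFamilySeq.isFamilySplit_of_forall_lt {p q : List ℤ} {m : ℤ}
    (h : IsFamilySeq (p ++ m :: q)) (hm : ∀ y ∈ p ++ q, y < m) : IsFamilySplit (p ++ [m]) q := by
  obtain ⟨A, D, hAD, hA, hD, hAinc, hDdec, hDA⟩ := isFamilySeq_iff.mp h
  have hle : ∀ y ∈ A ++ D, y ≤ m := by
    intro y hy
    rw [← hAD] at hy
    by_cases hym : y = m
    · exact hym.le
    · exact (hm y (by simpa [hym] using hy)).le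
  obtain ⟨v, hv⟩ := exists_mem_of_ne_nil A hA
  have hmD : m ∉ D := fun hmD => (hDA m hmD v hv).not_ge (hle v (mem_append_left _ hv))
  have hmA : m ∈ A := by
    have : m ∈ A ++ D := hAD ▸ mem_append_cons_self
    simpa [hmD] using this
  obtain ⟨A₁, A₂, rfl⟩ := append_of_mem hmA
  simp only [pairwise_append, pairwise_cons, mem_cons, forall_eq_or_imp] at hAinc
  have hA₂ : A₂ = [] := eq_nil_iff_forall_not_mem.mpr fun y hy =>
    (hAinc.2.1.1 y hy).not_ge (hle y (by simp [hy]))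
  have hmA₁ : m ∉ A₁ := fun hm => lt_irrefl m (hAinc.2.2 m hm).1
  obtain ⟨rfl, -, rfl⟩ := (append_cons_inj_of_notMem hmA₁ hmD).mp (by simpa [hA₂] using hAD.symm)
  subst hA₂
  exact ⟨by simpa [pairwise_append] using hAinc, hDdec, fun u hu v hv => hDA u hu v (by simp [hv])⟩

theorem exitPos_append_cons {p q : List ℤ} {x : ℤ} (hxp : x ∉ p)
    (hsplit : ¬ IsFamilySplit p (x :: q)) : ExitPos (p ++ x :: q) x := by
  refine ⟨mem_append_cons_self, fun m hm hfam => hsplit ?_⟩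
  rw [insertBefore_append_cons hxp] at hfam
  obtain ⟨hp, hq, hqp⟩ := hfam.isFamilySplit_of_forall_lt (by simpa using hm)
  exact ⟨hp.sublist (sublist_append_left _ _), hq, fun u hu v hv => hqp u hu v (by simp [hv])⟩

theorem exitPos_orderedInsert_red {a : List ℤ} {x : ℤ} (ha : a.Pairwise (· < ·)) (ha₀ : a ≠ [])
    (hxa : x ∉ a) (d : List ℤ) : ExitPos (a.orderedInsert (· ≤ ·) x ++ d) x := by
  obtain ⟨a₁, a₂, hins, rfl⟩ := exists_orderedInsert_eq_append_cons (· ≤ ·) x a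
  have hsorted := ha.orderedInsert_lt hxa
  rw [hins] at hsorted ⊢
  simp only [pairwise_append, pairwise_cons, mem_cons, forall_eq_or_imp] at hsorted
  obtain ⟨-, ⟨hxa₂, -⟩, ha₁x⟩ := hsorted
  rw [append_assoc, cons_append]
  refine exitPos_append_cons (fun h => lt_irrefl x (ha₁x x h).1) ?_
  rintro ⟨-, hq, hqp⟩
  rcases a₁ with _ | ⟨v, a₁⟩
  · obtain ⟨b, a₂, rfl⟩ := exists_cons_of_ne_nil ha₀
    exact (hxa₂ b mem_cons_self).asymm (rel_of_pairwise_cons hq mem_cons_self)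
  · exact (hqp x mem_cons_self v mem_cons_self).asymm (ha₁x v mem_cons_self).1

theorem exitPos_orderedInsert_blue {a d : List ℤ} {x : ℤ} (h : IsFamilySplit a d) (ha₀ : a ≠ [])
    (hxd : x ∉ d) (hlt : ∃ u ∈ d, x < u) : ExitPos (a ++ d.orderedInsert (· ≥ ·) x) x := by
  obtain ⟨d₁, d₂, hins, rfl⟩ := exists_orderedInsert_eq_append_cons (· ≥ ·) x d
  have hsorted := h.2.1.orderedInsert_gt hxd
  rw [hins] at hsorted ⊢
  simp only [pairwise_append, pairwise_cons, mem_cons, forall_eq_or_imp] at hsorted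
  obtain ⟨-, ⟨hxd₂, -⟩, hd₁x⟩ := hsorted
  obtain ⟨u, hu, hxu⟩ := hlt
  have hud₁ : u ∈ d₁ := (mem_append.mp hu).resolve_right fun hu₂ => (hxd₂ u hu₂).asymm hxu
  obtain ⟨v, hv⟩ := exists_mem_of_ne_nil a ha₀
  have hxad₁ : x ∉ a ++ d₁ := fun hx => by
    rcases mem_append.mp hx with hxa | hxd₁
    · exact (h.2.2 u hu x hxa).asymm hxu
    · exact lt_irrefl x (hd₁x x hxd₁).1
  rw [← append_assoc]
  refine exitPos_append_cons hxad₁ fun ⟨hp, _⟩ => ?_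
  exact ((pairwise_append.mp hp).2.2 v hv u hud₁).asymm (h.2.2 u hu v hv)

theorem entry_exit_second_general (l : List ℤ) (x : ℤ) (l' : List ℤ)
    (hx : x ∉ l) (hins : RegInsert l x l') :
    IsFamilySeq l' ∧ ExitPos l' x := by
  obtain ⟨a, d, rfl, ha, hd, hainc, hddec, hda, hcase⟩ := hins
  have hsplit : IsFamilySplit a d :=
    ⟨isChain_iff_pairwise.mp hainc, isChain_iff_pairwise.mp hddec, hda⟩
  rcases hcase with ⟨hdx, rfl⟩ | ⟨hlt, rfl⟩
  · have hxa : x ∉ a := fun h => hx (mem_append_left d h)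
    exact ⟨(hsplit.orderedInsert_red hxa hdx).isFamilySeq (orderedInsert_ne_nil _ x a) hd,
      exitPos_orderedInsert_red hsplit.1 ha hxa d⟩
  · have hxd : x ∉ d := fun h => hx (mem_append_right a h)
    have hxa : ∀ v ∈ a, x < v := fun v hv => by
      obtain ⟨u, hu, hxu⟩ := hlt
      exact hxu.trans (hda u hu v hv)
    exact ⟨(hsplit.orderedInsert_blue hxd hxa).isFamilySeq ha (orderedInsert_ne_nil _ x d),
      exitPos_orderedInsert_blue hsplit ha hxd hlt⟩

/-- Entry/exit lemma, second part: if `S` is a non-singlet family and `x ∉ S` is inserted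
regularly into `S` to obtain a family `S'`, then `x` is in an exit position in `S'`. -/
theorem entry_exit_second (l : List ℤ) (x : ℤ) (l' : List ℤ)
    (hfam : IsFamilySeq l) (hx : x ∉ l) (hins : RegInsert l x l') :
    IsFamilySeq l' ∧ ExitPos l' x :=
  entry_exit_second_general l x l' hx hins
end
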